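/- arXiv:2504.00838 — 2 statements merged into one kernel-verified Lean document; each statement's English description precedes it below -/
import Mathlib

section
/- Let A := ⟨a, w⟩ be the subgroup of Aut T generated by the rooted automorphism a and the directed automorphism w. Then A is isomorphic to the dihedral group of order 8. -/
universe u

namespace DicePaper

/-- Words of length `n` over the level-indexed sequence of alphabets `X`. -/
def Word (X : ℕ → Type u) : ℕ → Type u
  | 0 => PUnit
  | n + 1 => X 0 × Word (fun k => X (k + 1)) n

/-- An automorphism of the spherically homogeneous rooted tree with alphabets `X`,
encoded by its portrait: a permutation of the children alphabet at each vertex. -/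
def TreeAut (X : ℕ → Type u) : Type u :=
  ∀ n, Word X n → Equiv.Perm (X n)

namespace TreeAut

/-- The section (state) of a tree automorphism at a first-level vertex. -/
def sec {X : ℕ → Type u} (f : TreeAut X) (x : X 0) : TreeAut fun k => X (k + 1) :=
  fun n v => f (n + 1) (x, v)

/-- Action of a tree automorphism on the vertices (words). -/
def act : ∀ (X : ℕ → Type u), TreeAut X → ∀ n, Word X n → Word X n
  | _, _, 0, _ => PUnit.unit
  | X, f, n + 1, v => (f 0 PUnit.unit v.1, act (fun k => X (k + 1)) (f.sec v.1) n v.2)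

/-- The inverse action on words. -/
def invAct : ∀ (X : ℕ → Type u), TreeAut X → ∀ n, Word X n → Word X n
  | _, _, 0, _ => PUnit.unit
  | X, f, n + 1, v =>
    ((f 0 PUnit.unit)⁻¹ v.1,
      invAct (fun k => X (k + 1)) (f.sec ((f 0 PUnit.unit)⁻¹ v.1)) n v.2)

variable {X : ℕ → Type u}

instance : One (TreeAut X) := ⟨fun _ _ => 1⟩
instance : Mul (TreeAut X) := ⟨fun f g n v => f n (act X g n v) * g n v⟩
instance : Inv (TreeAut X) := ⟨fun f n v => (f n (invAct X f n v))⁻¹⟩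

theorem one_apply (n : ℕ) (v : Word X n) : (1 : TreeAut X) n v = 1 := rfl
theorem mul_apply (f g : TreeAut X) (n : ℕ) (v : Word X n) :
    (f * g) n v = f n (act X g n v) * g n v := rfl
theorem inv_apply (f : TreeAut X) (n : ℕ) (v : Word X n) :
    f⁻¹ n v = (f n (invAct X f n v))⁻¹ := rfl

theorem act_one : ∀ (n : ℕ) (X : ℕ → Type u) (v : Word X n), act X 1 n v = v
  | 0, _, _ => rfl
  | n + 1, X, v => by
    show ((1 : Equiv.Perm (X 0)) v.1, act _ (sec 1 v.1) n v.2) = v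
    have : sec (1 : TreeAut X) v.1 = 1 := rfl
    rw [this, act_one n _ v.2]
    rfl

theorem sec_mul (f g : TreeAut X) (x : X 0) :
    sec (f * g) x = sec f (g 0 PUnit.unit x) * sec g x := rfl

theorem act_mul : ∀ (n : ℕ) (X : ℕ → Type u) (f g : TreeAut X) (v : Word X n),
    act X (f * g) n v = act X f n (act X g n v)
  | 0, _, _, _, _ => rfl
  | n + 1, X, f, g, v => by
    show ((f * g) 0 PUnit.unit v.1, act _ (sec (f * g) v.1) n v.2) = _
    rw [sec_mul, act_mul n _ (sec f (g 0 PUnit.unit v.1)) (sec g v.1) v.2]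
    rfl

theorem sec_inv (f : TreeAut X) (x : X 0) :
    sec f⁻¹ x = (sec f ((f 0 PUnit.unit)⁻¹ x))⁻¹ := by
  funext n v
  rfl

theorem act_invAct : ∀ (n : ℕ) (X : ℕ → Type u) (f : TreeAut X) (v : Word X n),
    act X f n (invAct X f n v) = v
  | 0, _, _, _ => rfl
  | n + 1, X, f, v => by
    show (f 0 PUnit.unit ((f 0 PUnit.unit)⁻¹ v.1),
      act _ (sec f ((f 0 PUnit.unit)⁻¹ v.1)) n
        (invAct _ (sec f ((f 0 PUnit.unit)⁻¹ v.1)) n v.2)) = v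
    rw [act_invAct n _ _ v.2]
    simp
    rfl

theorem invAct_act : ∀ (n : ℕ) (X : ℕ → Type u) (f : TreeAut X) (v : Word X n),
    invAct X f n (act X f n v) = v
  | 0, _, _, _ => rfl
  | n + 1, X, f, v => by
    show ((f 0 PUnit.unit)⁻¹ (f 0 PUnit.unit v.1),
      invAct _ (sec f ((f 0 PUnit.unit)⁻¹ (f 0 PUnit.unit v.1))) n
        (act _ (sec f v.1) n v.2)) = v
    have h : (f 0 PUnit.unit)⁻¹ (f 0 PUnit.unit v.1) = v.1 := by simp
    rw [h, invAct_act n _ _ v.2]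
    rfl

instance : Group (TreeAut X) where
  mul_assoc f g h := by
    funext n v
    show (f n (act X g n (act X h n v)) * g n (act X h n v)) * h n v
        = f n (act X (g * h) n v) * (g n (act X h n v) * h n v)
    rw [act_mul]
    exact mul_assoc _ _ _
  one_mul f := by
    funext n v
    show (1 : TreeAut X) n (act X f n v) * f n v = f n v
    rw [one_apply, one_mul]
  mul_one f := by
    funext n v
    show f n (act X 1 n v) * (1 : TreeAut X) n v = f n v
    rw [act_one, one_apply, mul_one]
  inv_mul_cancel f := by
    funext n v
    show f⁻¹ n (act X f n v) * f n v = 1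
    rw [inv_apply, invAct_act, inv_mul_cancel]

end TreeAut



/-- The alphabet `X = {0,…,7}` identified with `(ℤ/2)³` via binary digits. -/
abbrev V : Type := ZMod 2 × ZMod 2 × ZMod 2

/-- The rooted automorphism of the regular rooted tree over `V` determined by a
permutation of the alphabet: it permutes the first letter of every word. -/
def rooted (σ : Equiv.Perm V) : TreeAut fun _ => V :=
  fun n _ => match n with
  | 0 => σ
  | _ + 1 => 1

/-- The rooted automorphism `a` (adding `1`, i.e. flipping the first binary digit). -/
def aAut : TreeAut fun _ => V := rooted (Equiv.addLeft ((1, 0, 0) : V))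

/-- The rooted automorphism `b` (adding `2`, i.e. flipping the second binary digit). -/
def bAut : TreeAut fun _ => V := rooted (Equiv.addLeft ((0, 1, 0) : V))

/-- The rooted automorphism `c` (adding `4`, i.e. flipping the third binary digit). -/
def cAut : TreeAut fun _ => V := rooted (Equiv.addLeft ((0, 0, 1) : V))

/-- The portrait of the directed automorphism `w`: its first-level sections are
`w` at `0`, `a` at `3 = (1,1,0)`, `b` at `5 = (1,0,1)`, `c` at `6 = (0,1,1)`,
and trivial elsewhere; `w` fixes the first level. -/
def wPerm : ∀ n, Word (fun _ => V) n → Equiv.Perm V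
  | 0, _ => 1
  | n + 1, v =>
    if v.1 = (0 : V) then wPerm n v.2
    else
      match n with
      | 0 =>
        if v.1 = ((1, 1, 0) : V) then Equiv.addLeft ((1, 0, 0) : V)
        else if v.1 = ((1, 0, 1) : V) then Equiv.addLeft ((0, 1, 0) : V)
        else if v.1 = ((0, 1, 1) : V) then Equiv.addLeft ((0, 0, 1) : V)
        else 1
      | _ + 1 => 1

/-- The directed automorphism `w` with `w = (w, 1, 1, a, 1, b, c, 1)`. -/
def wAut : TreeAut fun _ => V := fun n v => wPerm n v

/-- For `k ∈ X`, the unique element `h_k` of `H = ⟨a,b,c⟩` with `h_k(0) = k`,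
as a rooted automorphism of the tree. -/
def hA (k : V) : TreeAut fun _ => V := rooted (Equiv.addLeft k)

/-- The conjugates `w_k := h_k⁻¹ w h_k`, `k ∈ X`. -/
def wk (k : V) : TreeAut fun _ => V := (hA k)⁻¹ * wAut * hA k

/-- The red tetrahedron `{0, 3, 5, 6}`. -/
def red : Set V := {(0, 0, 0), (1, 1, 0), (1, 0, 1), (0, 1, 1)}

/-- The black tetrahedron `{1, 2, 4, 7}`. -/
def black : Set V := {(1, 0, 0), (0, 1, 0), (0, 0, 1), (1, 1, 1)}

end DicePaper


namespace DicePaper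

abbrev G := TreeAut fun _ => V

lemma addLeft_sq (x : V) : (Equiv.addLeft x : Equiv.Perm V) * Equiv.addLeft x = 1 := by
  revert x; decide

lemma wPerm_zero (n : ℕ) (u : Word (fun _ => V) n) :
    wPerm (n+1) ((0 : V), u) = wPerm n u := by
  simp [wPerm]

lemma wPerm_tail {x : V} (hx : x ≠ 0) (n : ℕ) (u u' : Word (fun _ => V) n) :
    wPerm (n+1) (x, u) = wPerm (n+1) (x, u') := by
  cases n <;> simp [wPerm, hx]

lemma wPerm_ne1 {x : V} (hx : x ≠ 0) (m : ℕ) (u : Word (fun _ => V) (m+1)) :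
    wPerm (m+2) (x, u) = 1 := by
  simp only [wPerm]
  rw [if_neg hx]

lemma wPerm_black {x : V}
    (hx : x = (1,0,0) ∨ x = (0,1,0) ∨ x = (0,0,1) ∨ x = (1,1,1))
    (n : ℕ) (u : Word (fun _ => V) n) : wPerm (n+1) (x, u) = 1 := by
  have hx0 : x ≠ 0 := by rcases hx with rfl|rfl|rfl|rfl <;> decide
  cases n with
  | zero => cases u; rcases hx with rfl|rfl|rfl|rfl <;> decide
  | succ m => exact wPerm_ne1 hx0 m u

lemma sec_w_zero : TreeAut.sec wAut (0 : V) = wAut := by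
  funext n v
  exact wPerm_zero n v

lemma sec_w_black {x : V}
    (hx : x = (1,0,0) ∨ x = (0,1,0) ∨ x = (0,0,1) ∨ x = (1,1,1)) :
    TreeAut.sec wAut x = 1 := by
  funext n v
  exact wPerm_black hx n v

lemma wPerm_act : ∀ (n : ℕ) (v : Word (fun _ => V) n),
    wPerm n (TreeAut.act (fun _ => V) wAut n v) = wPerm n v
  | 0, _ => rfl
  | n+1, v => by
    obtain ⟨x, u⟩ := v
    show wPerm (n+1) (x, TreeAut.act _ (TreeAut.sec wAut x) n u) = _
    by_cases h : x = (0 : V)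
    · subst h
      rw [sec_w_zero, wPerm_zero, wPerm_zero]
      exact wPerm_act n u
    · exact wPerm_tail h n _ u

lemma wPerm_sq : ∀ (n : ℕ) (v : Word (fun _ => V) n), wPerm n v * wPerm n v = 1
  | 0, _ => mul_one 1
  | n+1, v => by
    obtain ⟨x, u⟩ := v
    by_cases h : x = (0 : V)
    · subst h
      rw [wPerm_zero]
      exact wPerm_sq n u
    · cases n with
      | zero => cases u; revert x; decide
      | succ m => rw [wPerm_ne1 h m u, one_mul]

lemma w_sq : wAut * wAut = 1 := by
  funext n v
  rw [TreeAut.mul_apply]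
  show wPerm n (TreeAut.act _ wAut n v) * wPerm n v = 1
  rw [wPerm_act]
  exact wPerm_sq n v

lemma a_sq : aAut * aAut = 1 := by
  funext n v
  rw [TreeAut.mul_apply]
  cases n with
  | zero =>
    show (Equiv.addLeft ((1,0,0):V)) * (Equiv.addLeft ((1,0,0):V)) = 1
    exact addLeft_sq _
  | succ m =>
    show (1 : Equiv.Perm V) * 1 = 1
    simp

def pPerm : ∀ n, Word (fun _ => V) n → Equiv.Perm V
  | 0, _ => Equiv.addLeft ((1,0,0) : V)
  | n+1, v => wPerm (n+1) v

def pAut : G := fun n v => pPerm n v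

lemma p_def : aAut * wAut = pAut := by
  funext n v
  rw [TreeAut.mul_apply]
  cases n with
  | zero =>
    show (Equiv.addLeft ((1,0,0):V)) * 1 = Equiv.addLeft ((1,0,0):V)
    simp
  | succ m =>
    show (1 : Equiv.Perm V) * wPerm (m+1) v = wPerm (m+1) v
    simp

def gPerm : ∀ n, Word (fun _ => V) n → Equiv.Perm V
  | 0, _ => 1
  | n+1, v =>
    if v.1.2 = ((0,0) : ZMod 2 × ZMod 2) then wPerm n v.2
    else match n with
      | 0 =>
        if v.1.2 = ((1,0) : ZMod 2 × ZMod 2) then Equiv.addLeft ((1,0,0) : V)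
        else if v.1.2 = ((0,1) : ZMod 2 × ZMod 2) then Equiv.addLeft ((0,1,0) : V)
        else Equiv.addLeft ((0,0,1) : V)
      | _+1 => 1

def gAut : G := fun n v => gPerm n v

lemma gPerm_00 {x : V} (h : x.2 = ((0,0) : ZMod 2 × ZMod 2)) (n : ℕ)
    (u : Word (fun _ => V) n) : gPerm (n+1) (x, u) = wPerm n u := by
  simp only [gPerm]
  rw [if_pos h]

lemma gPerm_ne {x : V} (h : x.2 ≠ ((0,0) : ZMod 2 × ZMod 2)) (m : ℕ)
    (u : Word (fun _ => V) (m+1)) : gPerm (m+2) (x, u) = 1 := by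
  simp only [gPerm]
  rw [if_neg h]

lemma sec_p : TreeAut.sec pAut = TreeAut.sec wAut := rfl

lemma act_succ (f : TreeAut (fun _ => V)) (n : ℕ) (x : V) (u : Word (fun _ => V) n) :
    TreeAut.act (fun _ => V) f (n+1) (x, u)
      = (f 0 PUnit.unit x, TreeAut.act (fun _ => V) (TreeAut.sec f x) n u) := rfl

lemma p_sq : pAut * pAut = gAut := by
  funext n v
  rw [TreeAut.mul_apply]
  cases n with
  | zero =>
    show (Equiv.addLeft ((1,0,0):V)) * (Equiv.addLeft ((1,0,0):V)) = 1
    exact addLeft_sq _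
  | succ n =>
    obtain ⟨x, u⟩ := v
    rw [act_succ]
    cases n with
    | zero => cases u; revert x; decide
    | succ m =>
      have hroot : pAut 0 PUnit.unit x = (1,0,0) + x := rfl
      rw [hroot, sec_p]
      show wPerm (m+2) (((1,0,0):V)+x, TreeAut.act _ (TreeAut.sec wAut x) (m+1) u)
          * wPerm (m+2) (x,u) = gPerm (m+2) (x,u)
      rcases (show ∀ y : V, y = (0,0,0) ∨ y = (1,0,0) ∨ y = (0,1,0) ∨ y = (1,1,0) ∨
          y = (0,0,1) ∨ y = (1,0,1) ∨ y = (0,1,1) ∨ y = (1,1,1) from by decide) x with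
        rfl|rfl|rfl|rfl|rfl|rfl|rfl|rfl
      · rw [show ((1,0,0):V)+(0,0,0) = (1,0,0) from by decide,
          wPerm_black (Or.inl rfl), show ((0,0,0):V) = 0 from by decide,
          wPerm_zero, gPerm_00 (by decide), one_mul]
      · rw [show ((1,0,0):V)+(1,0,0) = 0 from by decide,
          sec_w_black (Or.inl rfl), TreeAut.act_one, wPerm_zero,
          wPerm_black (Or.inl rfl), mul_one, gPerm_00 (by decide)]
      · rw [show ((1,0,0):V)+(0,1,0) = (1,1,0) from by decide,
          wPerm_ne1 (by decide) m _, wPerm_ne1 (by decide) m u,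
          gPerm_ne (by decide), one_mul]
      · rw [show ((1,0,0):V)+(1,1,0) = (0,1,0) from by decide,
          wPerm_ne1 (by decide) m _, wPerm_ne1 (by decide) m u,
          gPerm_ne (by decide), one_mul]
      · rw [show ((1,0,0):V)+(0,0,1) = (1,0,1) from by decide,
          wPerm_ne1 (by decide) m _, wPerm_ne1 (by decide) m u,
          gPerm_ne (by decide), one_mul]
      · rw [show ((1,0,0):V)+(1,0,1) = (0,0,1) from by decide,
          wPerm_ne1 (by decide) m _, wPerm_ne1 (by decide) m u,
          gPerm_ne (by decide), one_mul]
      · rw [show ((1,0,0):V)+(0,1,1) = (1,1,1) from by decide,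
          wPerm_ne1 (by decide) m _, wPerm_ne1 (by decide) m u,
          gPerm_ne (by decide), one_mul]
      · rw [show ((1,0,0):V)+(1,1,1) = (0,1,1) from by decide,
          wPerm_ne1 (by decide) m _, wPerm_ne1 (by decide) m u,
          gPerm_ne (by decide), one_mul]

lemma sec_g_w (x1 : ZMod 2) : TreeAut.sec gAut ((x1, 0, 0) : V) = wAut := by
  funext n v
  exact gPerm_00 (x := (x1, 0, 0)) rfl n v

lemma g_sq : gAut * gAut = 1 := by
  funext n v
  rw [TreeAut.mul_apply, TreeAut.one_apply]
  cases n with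
  | zero => exact mul_one 1
  | succ n =>
    obtain ⟨x, u⟩ := v
    rw [act_succ]
    cases n with
    | zero => cases u; revert x; decide
    | succ m =>
      have hroot : gAut 0 PUnit.unit x = x := rfl
      rw [hroot]
      obtain ⟨x1, yz⟩ := x
      by_cases hx : yz = ((0,0) : ZMod 2 × ZMod 2)
      · subst hx
        rw [sec_g_w]
        show gPerm (m+2) ((x1,0,0), TreeAut.act _ wAut (m+1) u)
            * gPerm (m+2) ((x1,0,0), u) = 1
        rw [gPerm_00 rfl, gPerm_00 rfl, wPerm_act]
        exact wPerm_sq (m+1) u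
      · show gPerm (m+2) ((x1,yz), _) * gPerm (m+2) ((x1,yz), u) = 1
        rw [gPerm_ne hx, gPerm_ne hx, one_mul]

lemma hp4 : pAut ^ 4 = 1 := by
  have h2 : pAut ^ 2 = gAut := by rw [pow_two, p_sq]
  calc pAut ^ 4 = (pAut ^ 2) ^ 2 := by rw [← pow_mul]
    _ = gAut * gAut := by rw [h2, pow_two]
    _ = 1 := g_sq

lemma g_ne_one : gAut ≠ 1 := by
  intro h
  have h1 := congrFun (congrFun h 1) (((0,1,0) : V), PUnit.unit)
  exact absurd h1 (by decide)

lemma a_ne_one : aAut ≠ 1 := by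
  intro h
  have h1 := congrFun (congrFun h 0) PUnit.unit
  exact absurd h1 (by decide)

lemma w_ne_one : wAut ≠ 1 := by
  intro h
  have h1 := congrFun (congrFun h 1) (((1,1,0) : V), PUnit.unit)
  exact absurd h1 (by decide)

lemma g_ne_a : gAut ≠ aAut := by
  intro h
  have h1 := congrFun (congrFun h 0) PUnit.unit
  exact absurd h1 (by decide)

lemma hp2 : pAut ^ 2 ≠ 1 := by
  rw [pow_two, p_sq]
  intro h
  exact g_ne_one h

lemma a_inv : aAut⁻¹ = aAut := inv_eq_of_mul_eq_one_right a_sq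

lemma w_inv : wAut⁻¹ = wAut := inv_eq_of_mul_eq_one_right w_sq

lemma hp3 : pAut ^ 3 = pAut⁻¹ :=
  eq_inv_of_mul_eq_one_left (by rw [← pow_succ]; exact hp4)

lemma hpa : pAut * aAut = aAut * pAut ^ 3 := by
  rw [hp3, ← p_def, mul_inv_rev, w_inv, a_inv, mul_assoc]

lemma key : ∀ m : ℕ, pAut ^ m * aAut = aAut * pAut ^ (3 * m) := by
  intro m
  induction m with
  | zero => simp
  | succ k ih =>
    rw [pow_succ, mul_assoc, hpa, ← mul_assoc, ih, mul_assoc, ← pow_add,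
      show 3 * k + 3 = 3 * (k+1) from by ring]

lemma key' (m : ℕ) (t : G) : pAut ^ m * (aAut * t) = aAut * (pAut ^ (3 * m) * t) := by
  rw [← mul_assoc, key, mul_assoc]

lemma a_sq' (t : G) : aAut * (aAut * t) = t := by
  rw [← mul_assoc, a_sq, one_mul]

lemma zlem1 : ∀ i j : ZMod 4, (i.val + j.val) % 4 = (i + j).val % 4 := by decide

lemma zlem2 : ∀ i j : ZMod 4, (j - i).val % 4 = (3 * i.val + j.val) % 4 := by decide

lemma hexp1 (i j : ZMod 4) : pAut ^ ((i + j).val) = pAut ^ (i.val + j.val) := by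
  rw [pow_eq_pow_mod ((i+j).val) hp4, pow_eq_pow_mod (i.val + j.val) hp4, zlem1]

lemma hexp2 (i j : ZMod 4) : pAut ^ ((j - i).val) = pAut ^ (3 * i.val + j.val) := by
  rw [pow_eq_pow_mod ((j-i).val) hp4, pow_eq_pow_mod (3 * i.val + j.val) hp4, zlem2]

def phi : DihedralGroup 4 →* G where
  toFun x := match x with
    | .r i => pAut ^ i.val
    | .sr i => aAut * pAut ^ i.val
  map_one' := by
    show pAut ^ (0 : ZMod 4).val = 1
    simp
  map_mul' := by
    rintro (i | i) (j | j) <;>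
      simp only [DihedralGroup.r_mul_r, DihedralGroup.r_mul_sr,
        DihedralGroup.sr_mul_r, DihedralGroup.sr_mul_sr]
    · show pAut ^ ((i + j).val) = pAut ^ i.val * pAut ^ j.val
      rw [hexp1, pow_add]
    · show aAut * pAut ^ ((j - i).val) = pAut ^ i.val * (aAut * pAut ^ j.val)
      rw [key', ← pow_add, hexp2]
    · show aAut * pAut ^ ((i + j).val) = (aAut * pAut ^ i.val) * pAut ^ j.val
      rw [mul_assoc, ← pow_add, hexp1]
    · show pAut ^ ((j - i).val) = (aAut * pAut ^ i.val) * (aAut * pAut ^ j.val)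
      rw [mul_assoc, key', a_sq', ← pow_add, hexp2]

lemma phi_r (i : ZMod 4) : phi (.r i) = pAut ^ i.val := rfl

lemma phi_sr (i : ZMod 4) : phi (.sr i) = aAut * pAut ^ i.val := rfl

lemma p_ne_one : pAut ≠ 1 := by
  intro h
  apply hp2
  rw [h, one_pow]

lemma phi_inj : Function.Injective phi := by
  apply (injective_iff_map_eq_one phi).mpr
  rintro (i | i) h
  · rw [phi_r] at h
    fin_cases i
    · exact DihedralGroup.one_def.symm
    · exact absurd (by (have h' : pAut ^ 1 = 1 := h; simpa using h')) p_ne_one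
    · refine absurd ?_ g_ne_one
      have h' : pAut ^ 2 = 1 := h
      rw [pow_two, p_sq] at h'
      exact h'
    · exfalso
      have h1 : pAut⁻¹ = 1 := by rw [← hp3]; (have h' : pAut ^ 3 = 1 := h; simpa using h')
      exact p_ne_one (inv_eq_one.mp h1)
  · exfalso
    rw [phi_sr] at h
    fin_cases i
    · exact a_ne_one (by (have h' : aAut * pAut ^ 0 = 1 := h; simpa using h'))
    · have h2 : aAut * pAut = 1 := by (have h' : aAut * pAut ^ 1 = 1 := h; simpa using h')
      rw [← p_def, ← mul_assoc, a_sq, one_mul] at h2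
      exact w_ne_one h2
    · have h2 : aAut * gAut = 1 := by
        rw [← p_sq, ← pow_two]
        (have h' : aAut * pAut ^ 2 = 1 := h; simpa using h')
      have h3 := inv_eq_of_mul_eq_one_right h2
      rw [a_inv] at h3
      exact g_ne_a h3.symm
    · have h2 : aAut * pAut⁻¹ = 1 := by rw [← hp3]; (have h' : aAut * pAut ^ 3 = 1 := h; simpa using h')
      have h3 : aAut = pAut := mul_inv_eq_one.mp h2
      rw [← p_def] at h3
      have h4 : aAut * 1 = aAut * wAut := by rw [mul_one]; exact h3
      exact w_ne_one (mul_left_cancel h4).symm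

lemma phi_range : phi.range = Subgroup.closure {aAut, wAut} := by
  apply le_antisymm
  · rintro y ⟨x, rfl⟩
    have ha' : aAut ∈ Subgroup.closure {aAut, wAut} :=
      Subgroup.subset_closure (Set.mem_insert _ _)
    have hw' : wAut ∈ Subgroup.closure {aAut, wAut} :=
      Subgroup.subset_closure (Set.mem_insert_of_mem _ rfl)
    have hp' : pAut ∈ Subgroup.closure {aAut, wAut} := by
      rw [← p_def]; exact mul_mem ha' hw'
    cases x with
    | r i => exact pow_mem hp' _
    | sr i => exact mul_mem ha' (pow_mem hp' _)
  · rw [Subgroup.closure_le]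
    rintro x hx
    rcases hx with rfl | rfl
    · exact ⟨.sr 0, by rw [phi_sr]; simp⟩
    · refine ⟨.sr 1, ?_⟩
      rw [phi_sr]
      show aAut * pAut ^ (1 : ZMod 4).val = wAut
      rw [show (1 : ZMod 4).val = 1 from rfl, pow_one, ← p_def, ← mul_assoc, a_sq, one_mul]

end DicePaper

open DicePaper in
/-- `A = ⟨a, w⟩` is isomorphic to the dihedral group of order 8. -/
theorem stmt0 :
    Nonempty ((Subgroup.closure {aAut, wAut} : Subgroup (TreeAut fun _ => V)) ≃*
      DihedralGroup 4) := by
  exact ⟨((MonoidHom.ofInjective phi_inj).trans (MulEquiv.subgroupCongr phi_range)).symm⟩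
end

section
/- If k ∈ {0,3,5,6} and s ∈ {1,2,4,7} (i.e. k and s belong to different tetrahedrons), then the automorphisms w_k and w_s of T commute: w_k · w_s = w_s · w_k. -/
universe u

namespace DicePaper

namespace TreeAut

variable {X : ℕ → Type u}

theorem mul_comm_of (f g : TreeAut X)
    (hf : f 0 PUnit.unit = 1) (hg : g 0 PUnit.unit = 1)
    (h : ∀ x : X 0, sec f x * sec g x = sec g x * sec f x) :
    f * g = g * f := by
  funext n v
  match n, v with
  | 0, v =>
    show f 0 PUnit.unit * g 0 PUnit.unit = g 0 PUnit.unit * f 0 PUnit.unit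
    rw [hf, hg]
  | n + 1, v =>
    show f (n+1) (act X g (n+1) v) * g (n+1) v
        = g (n+1) (act X f (n+1) v) * f (n+1) v
    have hga : act X g (n+1) v = (v.1, act _ (sec g v.1) n v.2) := by
      show (g 0 PUnit.unit v.1, _) = _
      rw [hg]
      rfl
    have hfa : act X f (n+1) v = (v.1, act _ (sec f v.1) n v.2) := by
      show (f 0 PUnit.unit v.1, _) = _
      rw [hf]
      rfl
    rw [hga, hfa]
    exact congrFun (congrFun (h v.1) n) v.2

end TreeAut

theorem wk_zero (k : V) : (wk k) 0 PUnit.unit = 1 := by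
  show (((Equiv.addLeft k)⁻¹ : Equiv.Perm V) * 1) * Equiv.addLeft k = 1
  rw [mul_one, inv_mul_cancel]

theorem sec_wk (k x : V) : TreeAut.sec (wk k) x = TreeAut.sec wAut (k + x) := by
  have h1 : TreeAut.sec (hA k) x = 1 := rfl
  have h2 : TreeAut.sec ((hA k)⁻¹) (k + x) = 1 := by
    rw [TreeAut.sec_inv]
    show ((1 : TreeAut fun _ => V))⁻¹ = 1
    exact inv_one
  calc TreeAut.sec (wk k) x
      = TreeAut.sec ((hA k)⁻¹ * wAut) ((hA k) 0 PUnit.unit x) * TreeAut.sec (hA k) x :=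
        TreeAut.sec_mul _ _ _
    _ = TreeAut.sec ((hA k)⁻¹) (wAut 0 PUnit.unit (k + x)) * TreeAut.sec wAut (k + x) * 1 := by
        rw [h1]; rw [TreeAut.sec_mul]; rfl
    _ = TreeAut.sec ((hA k)⁻¹) (k + x) * TreeAut.sec wAut (k + x) * 1 := rfl
    _ = TreeAut.sec wAut (k + x) := by rw [h2, one_mul, mul_one]

theorem sec_w_eq_one (y : V) (hy : y ∉ red) : TreeAut.sec wAut y = 1 := by
  simp only [red, Set.mem_insert_iff, Set.mem_singleton_iff, not_or] at hy
  obtain ⟨h0, h3, h5, h6⟩ := hy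
  have h0' : ¬ y = (0 : V) := h0
  funext n v
  show wPerm (n+1) (y, v) = 1
  match n with
  | 0 =>
    simp only [wPerm]
    rw [if_neg h0', if_neg h3, if_neg h5, if_neg h6]
  | m + 1 =>
    simp only [wPerm]
    rw [if_neg h0']

set_option maxHeartbeats 1000000 in
set_option synthInstance.maxHeartbeats 400000 in
set_option synthInstance.maxSize 400 in
theorem key_s8 : ∀ k s x : V, k ∈ red → s ∈ black → (k + x ∉ red ∨ s + x ∉ red) := by
  simp only [red, black, Set.mem_insert_iff, Set.mem_singleton_iff, not_or]
  decide

end DicePaper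

open DicePaper in
/-- if `k` is in the red tetrahedron and `s` in the black one,
then `w_k` and `w_s` commute. -/
theorem stmt8 :
    ∀ k s : V, k ∈ red → s ∈ black → Commute (wk k) (wk s) := by
  intro k s hk hs
  show wk k * wk s = wk s * wk k
  apply TreeAut.mul_comm_of _ _ (wk_zero k) (wk_zero s)
  intro x
  rw [sec_wk, sec_wk]
  rcases key_s8 k s x hk hs with h | h
  · rw [sec_w_eq_one _ h, one_mul, mul_one]
  · rw [sec_w_eq_one _ h, one_mul, mul_one]
end
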